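/- arXiv:2106.08896 — 10 statements merged into one kernel-verified Lean document; each statement's English description precedes it below -/
import Mathlib

section
/- Let u : U ⟶ I and v : V ⟶ I be central idempotents in a monoidal category C. If m, n : U ⟶ V are morphisms satisfying u = m ≫ v and u = n ≫ v, then m = n. (A central idempotent factors through another in at most one way.) -/
open CategoryTheory MonoidalCategory

/-- A central idempotent in a monoidal category: a morphism `u : U ⟶ 𝟙_ C` together with a
half-braiding `σ` on `U`, such that the central equation
`λ_U ∘ (u ⊗ 𝟙_U) = ρ_U ∘ (𝟙_U ⊗ u)` holds and this common morphism is invertible,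
and `u` is a morphism in the Drinfeld centre from `(U, σ)` to the tensor unit. -/
structure IsCentralIdempotent {C : Type*} [Category C] [MonoidalCategory C]
    {U : C} (u : U ⟶ 𝟙_ C) (σ : HalfBraiding U) : Prop where
  central : (u ▷ U) ≫ (λ_ U).hom = (U ◁ u) ≫ (ρ_ U).hom
  isIso : IsIso ((u ▷ U) ≫ (λ_ U).hom)
  compat : ∀ A : C, (σ.β A).hom ≫ (A ◁ u) ≫ (ρ_ A).hom = (u ▷ A) ≫ (λ_ A).hom

/-- A central idempotent factors through another central idempotent in at most one way. -/
theorem stmt0 {C : Type*} [Category C] [MonoidalCategory C]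
    {U V : C} (u : U ⟶ 𝟙_ C) (σu : HalfBraiding U) (v : V ⟶ 𝟙_ C) (σv : HalfBraiding V)
    (hu : IsCentralIdempotent u σu) (hv : IsCentralIdempotent v σv)
    (m n : U ⟶ V) (hm : u = m ≫ v) (hn : u = n ≫ v) : m = n := by
  -- Key: for any factorization f, (U ◁ v) ≫ ρ_U ≫ f = (u ▷ V) ≫ λ_V
  have key : ∀ f : U ⟶ V, u = f ≫ v →
      (U ◁ v) ≫ (ρ_ U).hom ≫ f = (u ▷ V) ≫ (λ_ V).hom := by
    intro f hf
    calc (U ◁ v) ≫ (ρ_ U).hom ≫ f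
        = (U ◁ v) ≫ f ▷ (𝟙_ C) ≫ (ρ_ V).hom := by
          rw [MonoidalCategory.rightUnitor_naturality]
      _ = f ▷ V ≫ (V ◁ v) ≫ (ρ_ V).hom := by
          rw [← Category.assoc, whisker_exchange, Category.assoc]
      _ = f ▷ V ≫ (v ▷ V) ≫ (λ_ V).hom := by rw [hv.central]
      _ = (u ▷ V) ≫ (λ_ V).hom := by
          rw [← Category.assoc, ← comp_whiskerRight, ← hf]
  haveI : IsIso ((u ▷ U) ≫ (λ_ U).hom) := hu.isIso
  have sec : (inv ((u ▷ U) ≫ (λ_ U).hom)) ≫ (U ◁ m) ≫ (U ◁ v) ≫ (ρ_ U).hom = 𝟙 U := by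
    rw [← MonoidalCategory.whiskerLeft_comp_assoc, ← hm, ← hu.central,
      IsIso.inv_hom_id]
  calc m = (inv ((u ▷ U) ≫ (λ_ U).hom) ≫ (U ◁ m) ≫ (U ◁ v) ≫ (ρ_ U).hom) ≫ m := by
        rw [sec, Category.id_comp]
    _ = inv ((u ▷ U) ≫ (λ_ U).hom) ≫ (U ◁ m) ≫ ((U ◁ v) ≫ (ρ_ U).hom ≫ m) := by
        simp only [Category.assoc]
    _ = inv ((u ▷ U) ≫ (λ_ U).hom) ≫ (U ◁ m) ≫ ((U ◁ v) ≫ (ρ_ U).hom ≫ n) := by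
        rw [key m hm, key n hn]
    _ = (inv ((u ▷ U) ≫ (λ_ U).hom) ≫ (U ◁ m) ≫ (U ◁ v) ≫ (ρ_ U).hom) ≫ n := by
        simp only [Category.assoc]
    _ = n := by rw [sec, Category.id_comp]
end

section
/- For central idempotents u : U ⟶ I (with half-braiding σ^U) and v : V ⟶ I (with half-braiding σ^V) in a monoidal category C, the following are equivalent: (1) there exists a morphism m : U ⟶ V with u = m ≫ v which respects the half-braidings, i.e. (m ⊗ 𝟙_A) ≫ σ^V_A = σ^U_A ≫ (𝟙_A ⊗ m) for all A; (2) 𝟙_U ⊗ v : U ⊗ V ⟶ U ⊗ I is invertible; (3) v ⊗ 𝟙_U : V ⊗ U ⟶ I ⊗ U is invertible. Moreover the relation u ≤ v defined by these equivalent conditions is reflexive and transitive on central idempotents. -/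
open CategoryTheory MonoidalCategory

namespace CIAux

variable {C : Type*} [Category C] [MonoidalCategory C]

/-- fixpoint: braiding then deleting equals deleting. -/
theorem fix {V : C} {v : V ⟶ 𝟙_ C} {σv : HalfBraiding V} (hv : IsCentralIdempotent v σv) :
    (σv.β V).hom ≫ (V ◁ v) ≫ (ρ_ V).hom = (V ◁ v) ≫ (ρ_ V).hom := by
  rw [hv.compat V, hv.central]

end CIAux

namespace CIAux
variable {C : Type*} [Category C] [MonoidalCategory C]

theorem isIso_i_of_le {U V : C} {u : U ⟶ 𝟙_ C} {σu : HalfBraiding U} {v : V ⟶ 𝟙_ C}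
    {σv : HalfBraiding V} (hu : IsCentralIdempotent u σu) (hv : IsCentralIdempotent v σv)
    (m : U ⟶ V) (h1 : u = m ≫ v)
    (h2 : ∀ A : C, (m ▷ A) ≫ (σv.β A).hom = (σu.β A).hom ≫ (A ◁ m)) :
    IsIso (U ◁ v) := by
  haveI := hu.isIso
  set φ : U ⊗ U ⟶ U := (u ▷ U) ≫ (λ_ U).hom with hφ
  suffices h : IsIso ((U ◁ v) ≫ (ρ_ U).hom) by
    haveI := h
    have : U ◁ v = ((U ◁ v) ≫ (ρ_ U).hom) ≫ (ρ_ U).inv := by simp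
    rw [this]; infer_instance
  refine ⟨inv φ ≫ (U ◁ m), ?_, ?_⟩
  · -- i ≫ s = 𝟙
    rw [← cancel_epi (φ ▷ V)]
    have inner : (U ◁ v) ≫ (ρ_ U).hom ≫ m = (u ▷ V) ≫ (λ_ V).hom := by
      calc (U ◁ v) ≫ (ρ_ U).hom ≫ m
          = ((U ◁ v) ≫ (m ▷ 𝟙_ C)) ≫ (ρ_ V).hom := by
            rw [← rightUnitor_naturality m]; simp
        _ = (m ▷ V) ≫ ((σv.β V).hom ≫ (V ◁ v) ≫ (ρ_ V).hom) := by
            rw [whisker_exchange m v, fix hv, Category.assoc]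
        _ = ((σu.β V).hom ≫ (V ◁ m)) ≫ (V ◁ v) ≫ (ρ_ V).hom := by
            rw [← Category.assoc, ← h2 V, Category.assoc]
        _ = (σu.β V).hom ≫ (V ◁ u) ≫ (ρ_ V).hom := by
            rw [Category.assoc, ← MonoidalCategory.whiskerLeft_comp_assoc, ← h1]
        _ = (u ▷ V) ≫ (λ_ V).hom := hu.compat V
    simp only [Category.assoc]
    calc φ ▷ V ≫ (U ◁ v) ≫ (ρ_ U).hom ≫ inv φ ≫ (U ◁ m)
        = ((U ⊗ U) ◁ v) ≫ ((φ ▷ 𝟙_ C) ≫ (ρ_ U).hom) ≫ inv φ ≫ (U ◁ m) := by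
          rw [← whisker_exchange_assoc φ v]; simp
      _ = ((U ⊗ U) ◁ v) ≫ (ρ_ (U ⊗ U)).hom ≫ (φ ≫ inv φ) ≫ (U ◁ m) := by
          rw [rightUnitor_naturality φ]; simp
      _ = ((U ⊗ U) ◁ v) ≫ (ρ_ (U ⊗ U)).hom ≫ (U ◁ m) := by simp
      _ = (α_ U U V).hom ≫ U ◁ ((U ◁ v) ≫ (ρ_ U).hom ≫ m) := by monoidal
      _ = (α_ U U V).hom ≫ U ◁ ((u ▷ V) ≫ (λ_ V).hom) := by rw [inner]
      _ = ((U ◁ u) ≫ (ρ_ U).hom) ▷ V := by monoidal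
      _ = φ ▷ V ≫ 𝟙 (U ⊗ V) := by rw [← hu.central, hφ, Category.comp_id]
  · -- s ≫ i = 𝟙
    rw [Category.assoc, ← MonoidalCategory.whiskerLeft_comp_assoc, ← h1, ← hu.central, ← hφ]
    simp

end CIAux

namespace CIAux
variable {C : Type*} [Category C] [MonoidalCategory C]

/-- G3: braiding `A` past `V` then deleting a trailing `V` equals deleting the leading `V`. -/
theorem G3 {V : C} {v : V ⟶ 𝟙_ C} {σv : HalfBraiding V} (hv : IsCentralIdempotent v σv)
    (A : C) :
    ((σv.β A).hom ▷ V) ≫ ((A ⊗ V) ◁ v) ≫ (ρ_ (A ⊗ V)).hom =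
      ((v ▷ A) ≫ (λ_ A).hom) ▷ V := by
  calc ((σv.β A).hom ▷ V) ≫ ((A ⊗ V) ◁ v) ≫ (ρ_ (A ⊗ V)).hom
      = (σv.β A).hom ▷ V ≫ (α_ A V V).hom ≫
          (A ◁ ((σv.β V).hom ≫ (V ◁ v) ≫ (ρ_ V).hom)) := by rw [fix hv]; monoidal
    _ = (α_ V A V).hom ≫ (σv.β (A ⊗ V)).hom ≫ ((A ⊗ V) ◁ v) ≫ (ρ_ (A ⊗ V)).hom := by
        rw [σv.monoidal]; monoidal
    _ = (α_ V A V).hom ≫ (v ▷ (A ⊗ V)) ≫ (λ_ (A ⊗ V)).hom := by rw [hv.compat]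
    _ = ((v ▷ A) ≫ (λ_ A).hom) ▷ V := by monoidal

theorem G2pp {V : C} {v : V ⟶ 𝟙_ C} {σv : HalfBraiding V} (hv : IsCentralIdempotent v σv)
    (A : C) :
    ((V ⊗ A) ◁ v) ≫ (ρ_ (V ⊗ A)).hom ≫ (σv.β A).hom =
      ((v ▷ A) ≫ (λ_ A).hom) ▷ V := by
  rw [← rightUnitor_naturality, whisker_exchange_assoc, G3 hv]

theorem exists_le_of_isIso {U V : C} {u : U ⟶ 𝟙_ C} {σu : HalfBraiding U} {v : V ⟶ 𝟙_ C}
    {σv : HalfBraiding V} (hu : IsCentralIdempotent u σu) (hv : IsCentralIdempotent v σv)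
    (hA : IsIso (U ◁ v)) :
    ∃ m : U ⟶ V, u = m ≫ v ∧
      ∀ A : C, (m ▷ A) ≫ (σv.β A).hom = (σu.β A).hom ≫ (A ◁ m) := by
  have hi : IsIso ((U ◁ v) ≫ (ρ_ U).hom) := by infer_instance
  set i : U ⊗ V ⟶ U := (U ◁ v) ≫ (ρ_ U).hom with hidef
  refine ⟨inv i ≫ (u ▷ V) ≫ (λ_ V).hom, ?_, ?_⟩
  · -- u = m ≫ v
    have : (u ▷ V) ≫ (λ_ V).hom ≫ v = i ≫ u := by
      calc (u ▷ V) ≫ (λ_ V).hom ≫ v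
          = ((U ◁ v) ≫ (u ▷ 𝟙_ C)) ≫ (λ_ (𝟙_ C)).hom := by
            rw [← leftUnitor_naturality v, ← whisker_exchange_assoc, Category.assoc]
        _ = (U ◁ v) ≫ (ρ_ U).hom ≫ u := by
            rw [unitors_equal, Category.assoc, rightUnitor_naturality u]
        _ = i ≫ u := by rw [hidef, Category.assoc]
    rw [Category.assoc, Category.assoc, this, IsIso.inv_hom_id_assoc]
  · intro A
    set m : U ⟶ V := inv i ≫ (u ▷ V) ≫ (λ_ V).hom with hmdef
    have F0 : i ≫ m = (u ▷ V) ≫ (λ_ V).hom := by rw [hmdef, IsIso.hom_inv_id_assoc]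
    have F2 : i ≫ u = (u ▷ V) ≫ (λ_ V).hom ≫ v := by
      calc i ≫ u = (U ◁ v) ≫ (ρ_ U).hom ≫ u := by rw [hidef, Category.assoc]
        _ = ((U ◁ v) ≫ (u ▷ 𝟙_ C)) ≫ (ρ_ (𝟙_ C)).hom := by
            rw [← rightUnitor_naturality u]; simp
        _ = (u ▷ V) ≫ (𝟙_ C ◁ v) ≫ (λ_ (𝟙_ C)).hom := by
            rw [whisker_exchange u v, ← unitors_equal]; simp
        _ = (u ▷ V) ≫ (λ_ V).hom ≫ v := by rw [leftUnitor_naturality v]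
    have G1 : ((V ⊗ A) ◁ u) ≫ (ρ_ (V ⊗ A)).hom ≫ (σv.β A).hom =
        ((V ⊗ A) ◁ m) ≫ (((v ▷ A) ≫ (λ_ A).hom) ▷ V) := by
      rw [← cancel_epi ((V ⊗ A) ◁ i)]
      calc ((V ⊗ A) ◁ i) ≫ ((V ⊗ A) ◁ u) ≫ (ρ_ (V ⊗ A)).hom ≫ (σv.β A).hom
          = ((V ⊗ A) ◁ (i ≫ u)) ≫ (ρ_ (V ⊗ A)).hom ≫ (σv.β A).hom := by simp
        _ = ((V ⊗ A) ◁ ((u ▷ V) ≫ (λ_ V).hom)) ≫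
              (((V ⊗ A) ◁ v) ≫ (ρ_ (V ⊗ A)).hom ≫ (σv.β A).hom) := by
            rw [F2]; simp
        _ = ((V ⊗ A) ◁ (i ≫ m)) ≫ (((v ▷ A) ≫ (λ_ A).hom) ▷ V) := by
            rw [G2pp hv, F0]
        _ = ((V ⊗ A) ◁ i) ≫ ((V ⊗ A) ◁ m) ≫ (((v ▷ A) ≫ (λ_ A).hom) ▷ V) := by simp
    rw [← cancel_epi (i ▷ A)]
    calc (i ▷ A) ≫ (m ▷ A) ≫ (σv.β A).hom
        = (((u ▷ V) ≫ (λ_ V).hom) ▷ A) ≫ (σv.β A).hom := by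
          rw [← comp_whiskerRight_assoc, F0]
      _ = (α_ U V A).hom ≫ ((u ▷ (V ⊗ A)) ≫ (λ_ (V ⊗ A)).hom) ≫ (σv.β A).hom := by
          monoidal
      _ = (α_ U V A).hom ≫ (σu.β (V ⊗ A)).hom ≫
            (((V ⊗ A) ◁ u) ≫ (ρ_ (V ⊗ A)).hom ≫ (σv.β A).hom) := by
          rw [← hu.compat (V ⊗ A)]; simp
      _ = (α_ U V A).hom ≫ (σu.β (V ⊗ A)).hom ≫
            ((V ⊗ A) ◁ m) ≫ (((v ▷ A) ≫ (λ_ A).hom) ▷ V) := by rw [G1]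
      _ = (α_ U V A).hom ≫ (U ◁ ((v ▷ A) ≫ (λ_ A).hom)) ≫ (σu.β A).hom ≫ (A ◁ m) := by
          rw [σu.naturality_assoc, ← whisker_exchange]
      _ = (i ▷ A) ≫ (σu.β A).hom ≫ (A ◁ m) := by
          have h : (i ▷ A) = (α_ U V A).hom ≫ (U ◁ ((v ▷ A) ≫ (λ_ A).hom)) := by
            rw [hidef]; monoidal
          rw [h, Category.assoc]
end CIAux

namespace CIAux
variable {C : Type*} [Category C] [MonoidalCategory C]

theorem refl_isIso {W : C} (w : W ⟶ 𝟙_ C) (σw : HalfBraiding W)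
    (hw : IsCentralIdempotent w σw) : IsIso (W ◁ w) := by
  have h : IsIso ((W ◁ w) ≫ (ρ_ W).hom) := by rw [← hw.central]; exact hw.isIso
  have e : W ◁ w = ((W ◁ w) ≫ (ρ_ W).hom) ≫ (ρ_ W).inv := by simp
  rw [e]; infer_instance

theorem iso_iff_iso {U V : C} (v : V ⟶ 𝟙_ C) (σv : HalfBraiding V)
    (hv : IsCentralIdempotent v σv) : IsIso (U ◁ v) ↔ IsIso (v ▷ U) := by
  constructor
  · intro h
    have e : v ▷ U = ((σv.β U).hom ≫ (U ◁ v) ≫ (ρ_ U).hom) ≫ (λ_ U).inv := by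
      rw [hv.compat U]; simp
    rw [e]; infer_instance
  · intro h
    have e : U ◁ v = (σv.β U).inv ≫ ((v ▷ U) ≫ (λ_ U).hom) ≫ (ρ_ U).inv := by
      rw [← hv.compat U]; simp
    rw [e]; infer_instance

end CIAux


/-- For central idempotents `u : U ⟶ I` and `v : V ⟶ I`, the following are equivalent:
(1) `u` factors through `v` via a morphism respecting the half-braidings;
(2) `𝟙_U ⊗ v` is invertible; (3) `v ⊗ 𝟙_U` is invertible.
Moreover the resulting relation `≤` on central idempotents is reflexive and transitive. -/
theorem stmt1 {C : Type*} [Category C] [MonoidalCategory C]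
    {U V : C} (u : U ⟶ 𝟙_ C) (σu : HalfBraiding U) (v : V ⟶ 𝟙_ C) (σv : HalfBraiding V)
    (hu : IsCentralIdempotent u σu) (hv : IsCentralIdempotent v σv) :
    ((∃ m : U ⟶ V, u = m ≫ v ∧
        ∀ A : C, (m ▷ A) ≫ (σv.β A).hom = (σu.β A).hom ≫ (A ◁ m)) ↔
      IsIso (U ◁ v)) ∧
    (IsIso (U ◁ v) ↔ IsIso (v ▷ U)) ∧
    -- reflexivity
    (∀ {W : C} (w : W ⟶ 𝟙_ C) (σw : HalfBraiding W), IsCentralIdempotent w σw →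
      IsIso (W ◁ w)) ∧
    -- transitivity
    (∀ {W₁ W₂ W₃ : C} (w₁ : W₁ ⟶ 𝟙_ C) (w₂ : W₂ ⟶ 𝟙_ C) (w₃ : W₃ ⟶ 𝟙_ C)
      (σ₁ : HalfBraiding W₁) (σ₂ : HalfBraiding W₂) (σ₃ : HalfBraiding W₃),
      IsCentralIdempotent w₁ σ₁ → IsCentralIdempotent w₂ σ₂ → IsCentralIdempotent w₃ σ₃ →
      IsIso (W₁ ◁ w₂) → IsIso (W₂ ◁ w₃) → IsIso (W₁ ◁ w₃)) := by
  refine ⟨⟨fun ⟨m, h1, h2⟩ => CIAux.isIso_i_of_le hu hv m h1 h2,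
      fun h => CIAux.exists_le_of_isIso hu hv h⟩,
    CIAux.iso_iff_iso v σv hv, fun w σw hw => CIAux.refl_isIso w σw hw, ?_⟩
  intro W₁ W₂ W₃ w₁ w₂ w₃ σ₁ σ₂ σ₃ h1 h2 h3 i12 i23
  obtain ⟨m12, e12, b12⟩ := CIAux.exists_le_of_isIso h1 h2 i12
  obtain ⟨m23, e23, b23⟩ := CIAux.exists_le_of_isIso h2 h3 i23
  refine CIAux.isIso_i_of_le h1 h3 (m12 ≫ m23) (by rw [e12, e23, Category.assoc]) fun A => ?_
  rw [comp_whiskerRight, Category.assoc, b23, ← Category.assoc, b12,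
    Category.assoc, ← MonoidalCategory.whiskerLeft_comp]
end

section
/- Let u : U ⟶ I and v : V ⟶ I be central idempotents in a monoidal category C, with half-braidings σ^U and σ^V. Then (u ⊗ v) ≫ λ_I : U ⊗ V ⟶ I, equipped with the tensor-product half-braiding of σ^U and σ^V in the Drinfeld centre, is again a central idempotent; it satisfies u ∧ v ≤ u and u ∧ v ≤ v, and for any central idempotent w with w ≤ u and w ≤ v one has w ≤ u ∧ v (so it is a greatest lower bound). Moreover the identity 𝟙_I : I ⟶ I is a central idempotent and u ≤ 𝟙_I for every central idempotent u. Hence the central idempotents of C form a meet-semilattice with top element. -/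
open CategoryTheory MonoidalCategory

/-- Any half-braiding at the tensor unit is given by the unitors. -/
theorem myCI_halfBraiding_unit {C : Type*} [Category C] [MonoidalCategory C]
    {X : C} (σ : HalfBraiding X) :
    (σ.β (𝟙_ C)).hom = (ρ_ X).hom ≫ (λ_ X).inv := by
  have nat := σ.naturality (ρ_ (𝟙_ C)).hom
  rw [σ.monoidal (𝟙_ C) (𝟙_ C)] at nat
  simp at nat
  have h : 𝟙 ((𝟙_ C) ⊗ X : C) = (ρ_ ((𝟙_ C) ⊗ X : C)).inv ≫ (α_ (𝟙_ C) X (𝟙_ C)).hom ≫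
      (λ_ (X ⊗ (𝟙_ C) : C)).hom ≫ (σ.β (𝟙_ C)).hom := by
    rw [← cancel_epi (σ.β (𝟙_ C)).hom]; simpa using nat
  have h2 := congrArg (fun t => (λ_ (X ⊗ (𝟙_ C) : C)).inv ≫ (α_ (𝟙_ C) X (𝟙_ C)).inv ≫
    (ρ_ ((𝟙_ C) ⊗ X : C)).hom ≫ t) h
  simp at h2
  rw [← h2]; monoidal

/-- `u ≤ v` for central idempotents: `𝟙_U ⊗ v : U ⊗ V ⟶ U ⊗ I` is invertible. -/
def CentralIdempotentLE {C : Type*} [Category C] [MonoidalCategory C]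
    {U V : C} (_u : U ⟶ 𝟙_ C) (v : V ⟶ 𝟙_ C) : Prop :=
  IsIso (U ◁ v)

section Aux

variable {C : Type*} [Category C] [MonoidalCategory C]
variable {U V : C} {u : U ⟶ 𝟙_ C} {v : V ⟶ 𝟙_ C} {σu : HalfBraiding U} {σv : HalfBraiding V}

theorem myCI_isIso_wr (hu : IsCentralIdempotent u σu) : IsIso (u ▷ U) := by
  have := hu.isIso
  have h : u ▷ U = ((u ▷ U) ≫ (λ_ U).hom) ≫ (λ_ U).inv := by simp
  rw [h]; infer_instance

theorem myCI_isIso_wl (hu : IsCentralIdempotent u σu) : IsIso (U ◁ u) := by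
  have := hu.isIso
  have h : U ◁ u = ((u ▷ U) ≫ (λ_ U).hom) ≫ (ρ_ U).inv := by rw [hu.central]; simp
  rw [h]; infer_instance

theorem myCI_gen_nat {X A B : C} (σ : HalfBraiding X) (f : A ⟶ B) :
    X ◁ f = (σ.β A).hom ≫ (f ▷ X) ≫ (σ.β B).inv := by
  rw [← Category.assoc, Iso.eq_comp_inv]
  exact σ.naturality f

/-- Decomposition of `(U ⊗ V) ◁ u` through the half-braiding of `V`. -/
theorem myCI_key2 (u : U ⟶ 𝟙_ C) (σv : HalfBraiding V) :
    (U ⊗ V) ◁ u = (α_ U V U).hom ≫ U ◁ (σv.β U).hom ≫ (α_ U U V).inv ≫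
      ((U ◁ u) ▷ V) ≫ (α_ U (𝟙_ C) V).hom ≫ U ◁ (σv.β (𝟙_ C)).inv ≫ (α_ U V (𝟙_ C)).inv := by
  have h : V ◁ u = (σv.β U).hom ≫ (u ▷ V) ≫ (σv.β (𝟙_ C)).inv := myCI_gen_nat σv u
  calc (U ⊗ V) ◁ u = (α_ U V U).hom ≫ U ◁ (V ◁ u) ≫ (α_ U V (𝟙_ C)).inv := by monoidal
    _ = _ := by rw [h]; monoidal

theorem myCI_key3 (v : V ⟶ 𝟙_ C) :
    (U ⊗ V) ◁ v = (α_ U V V).hom ≫ U ◁ (V ◁ v) ≫ (α_ U V (𝟙_ C)).inv := by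
  monoidal

theorem myCI_key4 (u : U ⟶ 𝟙_ C) (v : V ⟶ 𝟙_ C) (W : C) :
    W ◁ ((u ⊗ₘ v) ≫ (λ_ (𝟙_ C)).hom) = (α_ W U V).inv ≫ ((W ◁ u) ▷ V) ≫
      ((ρ_ W).hom ▷ V) ≫ (W ◁ v) := by
  rw [MonoidalCategory.tensorHom_def]; monoidal

/-- The half-braiding of the tensor product in the Drinfeld centre, explicitly. -/
theorem myCI_meet_β (A : C) :
    (((Center.tensorObj ⟨U, σu⟩ ⟨V, σv⟩ : Center C)).2.β A).hom =
      (α_ U V A).hom ≫ (U ◁ (σv.β A).hom) ≫ (α_ U A V).inv ≫ ((σu.β A).hom ▷ V) ≫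
        (α_ A U V).hom := by
  simp [Center.tensorObj]

/-- Compatibility of the meet with its half-braiding. -/
theorem myCI_compat (hu : IsCentralIdempotent u σu) (hv : IsCentralIdempotent v σv) (A : C) :
    (((Center.tensorObj ⟨U, σu⟩ ⟨V, σv⟩ : Center C)).2.β A).hom ≫
        (A ◁ ((u ⊗ₘ v) ≫ (λ_ (𝟙_ C)).hom)) ≫ (ρ_ A).hom =
      (((u ⊗ₘ v) ≫ (λ_ (𝟙_ C)).hom) ▷ A) ≫ (λ_ A).hom := by
  rw [myCI_meet_β]
  calc _ = 𝟙 _ ⊗≫ U ◁ (σv.β A).hom ⊗≫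
        (((σu.β A).hom ≫ (A ◁ u) ≫ (ρ_ A).hom) ▷ V) ⊗≫ (A ◁ v) ⊗≫ 𝟙 A := by
        rw [MonoidalCategory.tensorHom_def]; monoidal
    _ = 𝟙 _ ⊗≫ (U ◁ (σv.β A).hom ≫ u ▷ (A ⊗ V)) ⊗≫ (A ◁ v) ⊗≫ 𝟙 A := by
        rw [hu.compat A]; monoidal
    _ = (α_ U V A).hom ≫ (u ▷ (V ⊗ A)) ≫ (λ_ (V ⊗ A)).hom ≫
        ((σv.β A).hom ≫ (A ◁ v) ≫ (ρ_ A).hom) := by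
        rw [whisker_exchange]; monoidal
    _ = _ := by rw [hv.compat A, MonoidalCategory.tensorHom_def]; monoidal

/-- Decomposition of the meet's left action. -/
theorem myCI_E (u : U ⟶ 𝟙_ C) (v : V ⟶ 𝟙_ C) :
    (((u ⊗ₘ v) ≫ (λ_ (𝟙_ C)).hom) ▷ (U ⊗ V)) ≫ (λ_ (U ⊗ V)).hom =
      (α_ U V (U ⊗ V)).hom ≫ (U ◁ ((v ▷ (U ⊗ V)) ≫ (λ_ (U ⊗ V)).hom)) ≫
        ((u ▷ (U ⊗ V)) ≫ (λ_ (U ⊗ V)).hom) := by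
  calc _ = 𝟙 _ ⊗≫ (u ▷ (V ⊗ (U ⊗ V)) ≫ (𝟙_ C) ◁ ((v ▷ (U ⊗ V)) ≫ (λ_ (U ⊗ V)).hom)) ⊗≫
        𝟙 _ := by rw [MonoidalCategory.tensorHom_def]; monoidal
    _ = 𝟙 _ ⊗≫ ((U ◁ ((v ▷ (U ⊗ V)) ≫ (λ_ (U ⊗ V)).hom)) ≫ u ▷ (U ⊗ V)) ⊗≫ 𝟙 _ := by
        rw [← whisker_exchange]
    _ = _ := by monoidal

theorem myCI_hevX (hv : IsCentralIdempotent v σv) :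
    (v ▷ (U ⊗ V)) ≫ (λ_ (U ⊗ V)).hom =
      (α_ V U V).inv ≫ ((σv.β U).hom ▷ V) ≫ (α_ U V V).hom ≫ (U ◁ ((v ▷ V) ≫ (λ_ V).hom)) := by
  calc _ = (α_ V U V).inv ≫ (((v ▷ U) ≫ (λ_ U).hom) ▷ V) := by monoidal
    _ = _ := by rw [← hv.compat U]; monoidal

theorem myCI_heuX (u : U ⟶ 𝟙_ C) :
    (u ▷ (U ⊗ V)) ≫ (λ_ (U ⊗ V)).hom = (α_ U U V).inv ≫ (((u ▷ U) ≫ (λ_ U).hom) ▷ V) := by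
  monoidal

/-- The central equation for the meet. -/
theorem myCI_central (hu : IsCentralIdempotent u σu) (hv : IsCentralIdempotent v σv) :
    (((u ⊗ₘ v) ≫ (λ_ (𝟙_ C)).hom) ▷ (U ⊗ V)) ≫ (λ_ (U ⊗ V)).hom =
      ((U ⊗ V) ◁ ((u ⊗ₘ v) ≫ (λ_ (𝟙_ C)).hom)) ≫ (ρ_ (U ⊗ V)).hom := by
  rw [myCI_E u v, myCI_hevX hv, myCI_heuX u, hv.central, hu.central]
  calc _ = 𝟙 _ ⊗≫ U ◁ ((σv.β U).hom ▷ V) ⊗≫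
        (((U ⊗ U : C) ◁ ((V ◁ v) ≫ (ρ_ V).hom)) ≫ (((U ◁ u) ≫ (ρ_ U).hom) ▷ V)) ⊗≫ 𝟙 _ := by
        monoidal
    _ = 𝟙 _ ⊗≫ U ◁ ((σv.β U).hom ▷ V) ⊗≫
        ((((U ◁ u) ≫ (ρ_ U).hom) ▷ (V ⊗ V : C)) ≫ (U ◁ ((V ◁ v) ≫ (ρ_ V).hom))) ⊗≫ 𝟙 _ := by
        rw [whisker_exchange]
    _ = 𝟙 _ ⊗≫ U ◁ (((σv.β U).hom ≫ (u ▷ V)) ▷ V) ⊗≫ U ◁ ((V ◁ v) ≫ (ρ_ V).hom) ⊗≫ 𝟙 _ := by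
        monoidal
    _ = 𝟙 _ ⊗≫ U ◁ ((((V ◁ u) ≫ (σv.β (𝟙_ C)).hom)) ▷ V) ⊗≫
        U ◁ ((V ◁ v) ≫ (ρ_ V).hom) ⊗≫ 𝟙 _ := by
        rw [σv.naturality u]
    _ = _ := by rw [myCI_halfBraiding_unit σv, MonoidalCategory.tensorHom_def]; monoidal

/-- Invertibility of the meet's left action. -/
theorem myCI_isIso (hu : IsCentralIdempotent u σu) (hv : IsCentralIdempotent v σv) :
    IsIso ((((u ⊗ₘ v) ≫ (λ_ (𝟙_ C)).hom) ▷ (U ⊗ V)) ≫ (λ_ (U ⊗ V)).hom) := by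
  have h1 := hu.isIso
  have h2 := hv.isIso
  rw [myCI_E u v, myCI_hevX hv, myCI_heuX u]
  infer_instance

end Aux

/-- The meet of two central idempotents: `(u ⊗ₘ v) ≫ λ_I : U ⊗ V ⟶ I`, with the
tensor-product half-braiding from the Drinfeld centre.  It is again a central idempotent,
is a greatest lower bound of `u` and `v`, and together with the top element `𝟙_I` this
makes the central idempotents a meet-semilattice with top. -/
theorem stmt2 {C : Type*} [Category C] [MonoidalCategory C]
    {U V : C} (u : U ⟶ 𝟙_ C) (σu : HalfBraiding U) (v : V ⟶ 𝟙_ C) (σv : HalfBraiding V)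
    (hu : IsCentralIdempotent u σu) (hv : IsCentralIdempotent v σv) :
    -- the meet is a central idempotent
    IsCentralIdempotent ((u ⊗ₘ v) ≫ (λ_ (𝟙_ C)).hom)
      (Center.tensorObj ⟨U, σu⟩ ⟨V, σv⟩).2 ∧
    -- it is a lower bound of `u` and `v`
    CentralIdempotentLE ((u ⊗ₘ v) ≫ (λ_ (𝟙_ C)).hom) u ∧
    CentralIdempotentLE ((u ⊗ₘ v) ≫ (λ_ (𝟙_ C)).hom) v ∧
    -- it is the greatest lower bound
    (∀ {W : C} (w : W ⟶ 𝟙_ C) (σw : HalfBraiding W), IsCentralIdempotent w σw →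
      CentralIdempotentLE w u → CentralIdempotentLE w v →
      CentralIdempotentLE w ((u ⊗ₘ v) ≫ (λ_ (𝟙_ C)).hom)) ∧
    -- the identity on the tensor unit is a central idempotent ...
    IsCentralIdempotent (𝟙 (𝟙_ C)) (Center.tensorUnit (C := C)).2 ∧
    -- ... and it is the top element
    CentralIdempotentLE u (𝟙 (𝟙_ C)) := by
  refine ⟨⟨myCI_central hu hv, myCI_isIso hu hv, myCI_compat hu hv⟩, ?_, ?_, ?_, ?_, ?_⟩
  · -- meet ≤ u
    have h1 : IsIso (U ◁ u) := myCI_isIso_wl hu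
    unfold CentralIdempotentLE
    rw [myCI_key2 u σv]
    infer_instance
  · -- meet ≤ v
    have h1 : IsIso (V ◁ v) := myCI_isIso_wl hv
    unfold CentralIdempotentLE
    rw [myCI_key3 v]
    infer_instance
  · -- greatest lower bound
    intro W w σw _hw hwu hwv
    have h1 : IsIso (W ◁ u) := hwu
    have h2 : IsIso (W ◁ v) := hwv
    unfold CentralIdempotentLE
    rw [myCI_key4 u v W]
    infer_instance
  · -- the unit is a central idempotent
    constructor
    · simp [unitors_equal]
    · simp only [MonoidalCategory.id_whiskerRight, Category.id_comp]; infer_instance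
    · intro A; simp [Center.tensorUnit]
  · -- top element
    unfold CentralIdempotentLE
    simp only [MonoidalCategory.whiskerLeft_id]
    infer_instance
end

section
/- Let u : U ⟶ I be a left idempotent in a monoidal category C (i.e. λ_U ∘ (u ⊗ 𝟙_U) : U ⊗ U ⟶ U is invertible), and let σ be a half-braiding on U satisfying ρ_A ∘ (𝟙_A ⊗ u) ∘ σ_A = λ_A ∘ (u ⊗ 𝟙_A) for all objects A. Then the central equation λ_U ∘ (u ⊗ 𝟙_U) = ρ_U ∘ (𝟙_U ⊗ u) holds (so that σ makes u a central idempotent) if and only if σ_U = 𝟙_{U ⊗ U}. -/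
open CategoryTheory MonoidalCategory

/-- For a left idempotent `u : U ⟶ I` equipped with a half-braiding `σ` compatible with `u`
(i.e. `ρ_A ∘ (𝟙_A ⊗ u) ∘ σ_A = λ_A ∘ (u ⊗ 𝟙_A)` for all `A`), the central equation
`λ_U ∘ (u ⊗ 𝟙_U) = ρ_U ∘ (𝟙_U ⊗ u)` holds if and only if `σ_U = 𝟙_{U ⊗ U}`. -/
theorem stmt3 {C : Type*} [Category C] [MonoidalCategory C]
    {U : C} (u : U ⟶ 𝟙_ C) (σ : HalfBraiding U)
    (hIso : IsIso ((u ▷ U) ≫ (λ_ U).hom))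
    (hcompat : ∀ A : C, (σ.β A).hom ≫ (A ◁ u) ≫ (ρ_ A).hom = (u ▷ A) ≫ (λ_ A).hom) :
    ((u ▷ U) ≫ (λ_ U).hom = (U ◁ u) ≫ (ρ_ U).hom) ↔ (σ.β U).hom = 𝟙 (U ⊗ U) := by
  constructor
  · intro h
    have h2 := hcompat U
    rw [h] at h2
    have : IsIso ((U ◁ u) ≫ (ρ_ U).hom) := h ▸ hIso
    exact (cancel_mono ((U ◁ u) ≫ (ρ_ U).hom)).mp (by simpa using h2)
  · intro h
    have h2 := hcompat U
    rw [h, Category.id_comp] at h2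
    exact h2.symm
end

section
/- Let C be a braided monoidal category with braiding β, and let u : U ⟶ I be a central idempotent with half-braiding σ. Then σ_B = β_{U,B} : U ⊗ B ⟶ B ⊗ U for every object B; that is, the half-braiding of a central idempotent in a braided monoidal category necessarily equals the braiding. -/
open CategoryTheory MonoidalCategory

/-- In a braided monoidal category, the half-braiding of a central idempotent necessarily
equals the braiding. -/
theorem stmt4 {C : Type*} [Category C] [MonoidalCategory C] [BraidedCategory C]
    {U : C} (u : U ⟶ 𝟙_ C) (σ : HalfBraiding U) (h : IsCentralIdempotent u σ) (B : C) :
    (σ.β B).hom = (β_ U B).hom := by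
  obtain ⟨central, isIso, compat⟩ := h
  set g : U ⊗ B ⟶ U ⊗ B := (σ.β B).hom ≫ (β_ U B).inv with hg
  -- the braiding also satisfies compat
  have hβ : (β_ U B).hom ≫ (B ◁ u) ≫ (ρ_ B).hom = (u ▷ B) ≫ (λ_ B).hom := by
    rw [← BraidedCategory.braiding_naturality_left_assoc u B]
    simp
  have hgfix : g ≫ (u ▷ B) ≫ (λ_ B).hom = (u ▷ B) ≫ (λ_ B).hom := by
    rw [hg, ← hβ]
    simp only [Category.assoc, Iso.inv_hom_id_assoc]
    rw [compat]
    exact hβ.symm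
  -- q expressed via the idempotent multiplication
  have hq1 : (u ▷ (U ⊗ B)) ≫ (λ_ (U ⊗ B)).hom
      = (α_ U U B).inv ≫ (((u ▷ U) ≫ (λ_ U).hom) ▷ B) := by
    simp
  have hq2 : U ◁ ((u ▷ B) ≫ (λ_ B).hom)
      = (α_ U U B).inv ≫ (((U ◁ u) ≫ (ρ_ U).hom) ▷ B) := by
    simp [← associator_inv_naturality_middle_assoc]
  have hq3 : U ◁ ((u ▷ B) ≫ (λ_ B).hom) = (u ▷ (U ⊗ B)) ≫ (λ_ (U ⊗ B)).hom := by
    rw [hq1, hq2, central]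
  have hqiso : IsIso ((u ▷ (U ⊗ B)) ≫ (λ_ (U ⊗ B)).hom) := by
    rw [hq1]
    exact inferInstance
  have key : ((u ▷ (U ⊗ B)) ≫ (λ_ (U ⊗ B)).hom) ≫ g
      = (u ▷ (U ⊗ B)) ≫ (λ_ (U ⊗ B)).hom := by
    calc ((u ▷ (U ⊗ B)) ≫ (λ_ (U ⊗ B)).hom) ≫ g
        = (U ◁ g) ≫ (u ▷ (U ⊗ B)) ≫ (λ_ (U ⊗ B)).hom := by
          rw [whisker_exchange_assoc]
          simp
      _ = (U ◁ g) ≫ U ◁ ((u ▷ B) ≫ (λ_ B).hom) := by rw [hq3]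
      _ = U ◁ (g ≫ (u ▷ B) ≫ (λ_ B).hom) := by
          simp
      _ = U ◁ ((u ▷ B) ≫ (λ_ B).hom) := by rw [hgfix]
      _ = (u ▷ (U ⊗ B)) ≫ (λ_ (U ⊗ B)).hom := hq3
  have hg1 : g = 𝟙 (U ⊗ B) := by
    have := hqiso
    rw [← cancel_epi ((u ▷ (U ⊗ B)) ≫ (λ_ (U ⊗ B)).hom)]
    simpa using key
  have h2 : (σ.β B).hom ≫ (β_ U B).inv = 𝟙 (U ⊗ B) := hg1
  have h3 := congrArg (fun f => f ≫ (β_ U B).hom) h2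
  simpa using h3
end

section
/- Let C be a cartesian monoidal category (tensor product given by binary products, tensor unit a terminal object ⊤). An object U of C is the domain of a central idempotent (i.e. the unique morphism u : U ⟶ ⊤ can be equipped with a half-braiding making it a central idempotent) if and only if U is subterminal, i.e. the unique morphism U ⟶ ⊤ is a monomorphism (equivalently, any two morphisms A ⟶ U are equal). -/
open CategoryTheory MonoidalCategory Limits

/-!
In a cartesian monoidal category both `u ▷ U ≫ λ_U` and `U ◁ u ≫ ρ_U` are projections
`U ⊗ U ⟶ U`, so the central equation says exactly that the two projections agree, i.e. that any
two maps into `U` coincide. Conversely, for subterminal `U` the symmetry of the product is a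
half-braiding for which compatibility is automatic, and the diagonal inverts the projection.
-/

namespace CategoryTheory.CartesianMonoidalCategory

variable {C : Type*} [Category C] [CartesianMonoidalCategory C] {U : C}

lemma whiskerRight_comp_leftUnitor_hom (u : U ⟶ 𝟙_ C) (A : C) :
    u ▷ A ≫ (λ_ A).hom = snd U A := by
  rw [toUnit_unique u (toUnit U), whiskerRight_toUnit_comp_leftUnitor_hom]

lemma whiskerLeft_comp_rightUnitor_hom (u : U ⟶ 𝟙_ C) (A : C) :
    A ◁ u ≫ (ρ_ A).hom = fst A U := by
  rw [toUnit_unique u (toUnit U), whiskerLeft_toUnit_comp_rightUnitor_hom]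

lemma isSubterminal_iff_fst_eq_snd : IsSubterminal U ↔ fst U U = snd U U := by
  refine ⟨fun hU => hU _ _, fun h Z f g => ?_⟩
  simpa using lift f g ≫= h

end CategoryTheory.CartesianMonoidalCategory

section

open CartesianMonoidalCategory

variable {C : Type*} [Category C] [CartesianMonoidalCategory C] {U : C}

lemma CategoryTheory.IsSubterminal.isIso_snd (hU : IsSubterminal U) : IsIso (snd U U) :=
  ⟨lift (𝟙 U) (𝟙 U), by ext <;> apply hU, by simp⟩

lemma CategoryTheory.IsSubterminal.isCentralIdempotent [BraidedCategory C] (hU : IsSubterminal U)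
    (u : U ⟶ 𝟙_ C) : IsCentralIdempotent u (Center.ofBraidedObj U).2 where
  central := by
    rw [whiskerRight_comp_leftUnitor_hom, whiskerLeft_comp_rightUnitor_hom]
    exact (isSubterminal_iff_fst_eq_snd.mp hU).symm
  isIso := by
    rw [whiskerRight_comp_leftUnitor_hom]
    exact hU.isIso_snd
  compat A := by
    simp [whiskerRight_comp_leftUnitor_hom, whiskerLeft_comp_rightUnitor_hom]

lemma IsCentralIdempotent.isSubterminal {u : U ⟶ 𝟙_ C} {σ : HalfBraiding U}
    (h : IsCentralIdempotent u σ) : IsSubterminal U := by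
  have := h.central
  rw [whiskerRight_comp_leftUnitor_hom, whiskerLeft_comp_rightUnitor_hom] at this
  exact isSubterminal_iff_fst_eq_snd.mpr this.symm

theorem exists_isCentralIdempotent_iff_isSubterminal (u : U ⟶ 𝟙_ C) :
    (∃ σ : HalfBraiding U, IsCentralIdempotent u σ) ↔ IsSubterminal U := by
  let : BraidedCategory C := .ofCartesianMonoidalCategory
  exact ⟨fun ⟨_, h⟩ => h.isSubterminal, fun hU => ⟨_, hU.isCentralIdempotent u⟩⟩

end

/-- In a cartesian monoidal category, an object `U` is the domain of a central idempotent
(i.e. the unique morphism `U ⟶ ⊤` can be equipped with a half-braiding making it a central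
idempotent) if and only if `U` is subterminal, i.e. `U ⟶ ⊤` is a monomorphism. -/
theorem stmt5 {C : Type*} [Category C] [HasTerminal C] [HasBinaryProducts C] (U : C) :
    letI : MonoidalCategory C :=
      (CartesianMonoidalCategory.ofChosenFiniteProducts (getLimitCone (Functor.empty C))
        (fun X Y => getLimitCone (pair X Y))).toMonoidalCategory
    ((∃ σ : HalfBraiding U, IsCentralIdempotent (terminal.from U) σ) ↔
      Mono (terminal.from U)) := by
  let := CartesianMonoidalCategory.ofChosenFiniteProducts (getLimitCone (Functor.empty C))
    (fun X Y => getLimitCone (pair X Y))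
  exact (exists_isCentralIdempotent_iff_isSubterminal _).trans
    ⟨IsSubterminal.mono_terminal_from, fun _ => isSubterminal_of_mono_terminal_from⟩
end

section
/- Let C be a category, and consider the monoidal category of endofunctors of C with composition as tensor product and the identity functor as tensor unit. If (T, σ) is an object of its Drinfeld centre and ε : T ⟶ 𝟭_C is a central idempotent (with half-braiding σ), then ε is a natural isomorphism. Consequently every central idempotent of the endofunctor category is isomorphic to the identity (the semilattice of central idempotents is trivial). -/
open CategoryTheory MonoidalCategory

attribute [local instance] CategoryTheory.endofunctorMonoidalCategory

/-- In the monoidal category of endofunctors of `C` (composition as tensor product,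
identity functor as unit), every central idempotent `ε : T ⟶ 𝟭 C` is a natural isomorphism;
in particular every central idempotent is isomorphic to the identity functor. -/
theorem stmt6 {C : Type*} [Category C] (T : C ⥤ C) (σ : HalfBraiding T) (ε : T ⟶ 𝟭 C)
    (h : IsCentralIdempotent (C := C ⥤ C) ε σ) :
    IsIso ε ∧ Nonempty (T ≅ 𝟭 C) := by
  have hc : ∀ X : C, T.map (ε.app X) = ε.app (T.obj X) := by
    intro X
    have := congrArg (fun η => NatTrans.app η X) h.central
    simpa using this
  have hiso : IsIso ((ε ▷ T) ≫ (λ_ T).hom) := h.isIso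
  have happiso : ∀ X : C, IsIso (ε.app (T.obj X)) := by
    intro X
    have : IsIso (((ε ▷ T) ≫ (λ_ T).hom).app X) := inferInstance
    have h2 : ((ε ▷ T) ≫ (λ_ T).hom).app X = ε.app (T.obj X) := by
      simp [hc X]
    rwa [h2] at this
  have key : ∀ Y : C, IsIso (ε.app Y) := by
    intro Y
    set A : C ⥤ C := (Functor.const C).obj Y with hA
    set s : Y ⟶ T.obj Y := (σ.β A).hom.app Y with hs
    have hcomp : s ≫ ε.app Y = 𝟙 Y := by
      have := congrArg (fun η => NatTrans.app η Y) (h.compat A)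
      simp [hA, hs] at this
      exact this
    have h1 : T.map s ≫ ε.app (T.obj Y) = 𝟙 (T.obj Y) := by
      rw [← hc Y, ← T.map_comp, hcomp, T.map_id]
    have h2 : ε.app Y ≫ s = 𝟙 (T.obj Y) := by
      have hnat : T.map s ≫ ε.app (T.obj Y) = ε.app Y ≫ s := ε.naturality s
      rw [← hnat, h1]
    exact ⟨s, h2, hcomp⟩
  have : IsIso ε := by
    have : ∀ X : C, IsIso (ε.app X) := key
    exact NatIso.isIso_of_isIso_app ε
  exact ⟨this, ⟨asIso ε⟩⟩
end

section
/- Let u : U ⟶ I and w : W ⟶ I be central idempotents in a monoidal category C, and suppose that for every object X the commuting square with vertices X ⊗ U ⊗ W, X ⊗ U, X ⊗ W, X — whose maps tensor away u and w respectively via the unitors (and half-braiding), e.g. X ⊗ U ⟶ X is ρ_X ∘ (𝟙_X ⊗ u) — is a pushout (this expresses that u ∨ w = 1 holds universally). Then: (i) morphisms f, g : A ⟶ B are equal if and only if f ⊗ u = g ⊗ u and f ⊗ w = g ⊗ w (as morphisms A ⊗ U ⟶ B ⊗ I and A ⊗ W ⟶ B ⊗ I); and (ii) a morphism f : A ⟶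 B is invertible if and only if f ⊗ 𝟙_U : A ⊗ U ⟶ B ⊗ U and f ⊗ 𝟙_W : A ⊗ W ⟶ B ⊗ W are invertible. -/
open CategoryTheory MonoidalCategory Limits

/-- Deleting an "idempotent" is natural. -/
lemma delete_natural {C : Type*} [Category C] [MonoidalCategory C] {A B V : C}
    (f : A ⟶ B) (v : V ⟶ 𝟙_ C) :
    ((A ◁ v) ≫ (ρ_ A).hom) ≫ f = (f ▷ V) ≫ (B ◁ v) ≫ (ρ_ B).hom := by
  rw [← whisker_exchange_assoc]
  simp

/-- Let `u` and `w` be central idempotents such that for every object `X` the square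
`X ⊗ U ⊗ W, X ⊗ U, X ⊗ W, X` (deleting `w` resp. `u` via the unitors) is a pushout
(i.e. `u ∨ w = 1` universally).  Then (i) morphisms `f, g : A ⟶ B` are equal iff
`f ⊗ u = g ⊗ u` and `f ⊗ w = g ⊗ w`, and (ii) `f` is invertible iff `f ⊗ 𝟙_U` and
`f ⊗ 𝟙_W` are invertible. -/
theorem stmt12 {C : Type*} [Category C] [MonoidalCategory C]
    {U W : C} (u : U ⟶ 𝟙_ C) (σu : HalfBraiding U) (w : W ⟶ 𝟙_ C) (σw : HalfBraiding W)
    (hu : IsCentralIdempotent u σu) (hw : IsCentralIdempotent w σw)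
    (hpush : ∀ X : C, IsPushout
      -- delete `w` : (X ⊗ U) ⊗ W ⟶ X ⊗ U
      (((X ⊗ U) ◁ w) ≫ (ρ_ (X ⊗ U)).hom)
      -- delete `u` : (X ⊗ U) ⊗ W ⟶ X ⊗ W
      ((α_ X U W).hom ≫ (X ◁ (u ▷ W)) ≫ (X ◁ (λ_ W).hom))
      -- delete `u` : X ⊗ U ⟶ X
      ((X ◁ u) ≫ (ρ_ X).hom)
      -- delete `w` : X ⊗ W ⟶ X
      ((X ◁ w) ≫ (ρ_ X).hom)) :
    (∀ {A B : C} (f g : A ⟶ B), f = g ↔ (f ⊗ₘ u = g ⊗ₘ u ∧ f ⊗ₘ w = g ⊗ₘ w)) ∧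
    (∀ {A B : C} (f : A ⟶ B), IsIso f ↔ (IsIso (f ▷ U) ∧ IsIso (f ▷ W))) := by
  constructor
  · intro A B f g
    constructor
    · rintro rfl; exact ⟨rfl, rfl⟩
    · rintro ⟨h1, h2⟩
      apply (hpush A).hom_ext
      · rw [delete_natural f u, delete_natural g u, ← tensorHom_def_assoc, ← tensorHom_def_assoc, h1]
      · rw [delete_natural f w, delete_natural g w, ← tensorHom_def_assoc, ← tensorHom_def_assoc, h2]
  · intro A B f
    constructor
    · intro hf
      exact ⟨inferInstance, inferInstance⟩
    · rintro ⟨hU, hW⟩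
      -- candidate pieces of the inverse
      set p : B ⊗ U ⟶ A := inv (f ▷ U) ≫ (A ◁ u) ≫ (ρ_ A).hom with hp
      set q : B ⊗ W ⟶ A := inv (f ▷ W) ≫ (A ◁ w) ≫ (ρ_ A).hom with hq
      have hcomp : (((B ⊗ U) ◁ w) ≫ (ρ_ (B ⊗ U)).hom) ≫ p =
          ((α_ B U W).hom ≫ (B ◁ (u ▷ W)) ≫ (B ◁ (λ_ W).hom)) ≫ q := by
        have : IsIso ((f ▷ U) ▷ W) := inferInstance
        rw [← cancel_epi ((f ▷ U) ▷ W)]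
        have hL : ((f ▷ U) ▷ W) ≫ (((B ⊗ U) ◁ w) ≫ (ρ_ (B ⊗ U)).hom) ≫ p =
            ((((A ⊗ U) ◁ w) ≫ (ρ_ (A ⊗ U)).hom) ≫ ((A ◁ u) ≫ (ρ_ A).hom)) := by
          rw [hp, ← Category.assoc, ← delete_natural (f ▷ U) w]
          simp
        have hR : ((f ▷ U) ▷ W) ≫ ((α_ B U W).hom ≫ (B ◁ (u ▷ W)) ≫ (B ◁ (λ_ W).hom)) ≫ q =
            (((α_ A U W).hom ≫ (A ◁ (u ▷ W)) ≫ (A ◁ (λ_ W).hom)) ≫ ((A ◁ w) ≫ (ρ_ A).hom)) := by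
          rw [hq]
          have e1 : ((f ▷ U) ▷ W) ≫ (α_ B U W).hom = (α_ A U W).hom ≫ (f ▷ (U ⊗ W)) := by
            simp
          have e2 : (f ▷ (U ⊗ W)) ≫ (B ◁ (u ▷ W)) = (A ◁ (u ▷ W)) ≫ (f ▷ (𝟙_ C ⊗ W)) := by
            rw [whisker_exchange]
          have e3 : (f ▷ (𝟙_ C ⊗ W)) ≫ (B ◁ (λ_ W).hom) = (A ◁ (λ_ W).hom) ≫ (f ▷ W) := by
            rw [whisker_exchange]
          slice_lhs 1 2 => rw [e1]
          slice_lhs 2 3 => rw [e2]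
          slice_lhs 3 4 => rw [e3]
          simp
        rw [hL, hR]
        exact (hpush A).w
      set g : B ⟶ A := (hpush B).desc p q hcomp with hg
      have hgl : ((B ◁ u) ≫ (ρ_ B).hom) ≫ g = p := (hpush B).inl_desc p q hcomp
      have hgr : ((B ◁ w) ≫ (ρ_ B).hom) ≫ g = q := (hpush B).inr_desc p q hcomp
      refine ⟨⟨g, ?_, ?_⟩⟩
      · -- f ≫ g = 𝟙 A
        apply (hpush A).hom_ext
        · rw [← Category.assoc, delete_natural f u, Category.assoc, hgl, hp]
          simp
        · rw [← Category.assoc, delete_natural f w, Category.assoc, hgr, hq]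
          simp
      · -- g ≫ f = 𝟙 B
        apply (hpush B).hom_ext
        · rw [← Category.assoc, hgl, hp, Category.assoc, delete_natural f u]
          simp
        · rw [← Category.assoc, hgr, hq, Category.assoc, delete_natural f w]
          simp
end

section
/- Let u : U ⟶ I be a central idempotent in a monoidal category C. Then u is a split monomorphism (i.e. there exists e : I ⟶ U with u ≫ e = 𝟙_U) if and only if U is self-dual with evaluation (u ⊗ u) ≫ λ_I : U ⊗ U ⟶ I; that is, if and only if there exists a coevaluation η : I ⟶ U ⊗ U such that η and ε := (u ⊗ u) ≫ λ_I satisfy the two zigzag (triangle) identities exhibiting an adjunction U ⊣ U. -/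
/-!
Write `m := (u ▷ U) ≫ λ_U : U ⊗ U ⟶ U`. Centrality makes `m` associative and natural in the
sense `(f ▷ U) ≫ m = m ≫ f`, and the evaluation is `m ≫ u`. By associativity the two zigzag
identities for `η` say exactly that `e := η ≫ m` is a right, resp. left, unit for `m`. Being a
left unit means `(e ≫ u) ▷ U = 𝟙`, i.e. `e ▷ U` inverts the isomorphism `u ▷ U`; since `m` is
invertible and natural, `f ↦ f ▷ U` is faithful on `End U`, so this is the same as `u ≫ e = 𝟙`.
Conversely a splitting `e` of `u` gives the coevaluation `e ≫ m⁻¹`.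
-/

open CategoryTheory MonoidalCategory

section

variable {C : Type*} [Category C] [MonoidalCategory C] {U : C} (u : U ⟶ 𝟙_ C)

def idempotentMul : U ⊗ U ⟶ U := (u ▷ U) ≫ (λ_ U).hom

lemma tensorHom_self_comp_leftUnitor :
    (u ⊗ₘ u) ≫ (λ_ (𝟙_ C)).hom = idempotentMul u ≫ u := by
  rw [MonoidalCategory.tensorHom_def, Category.assoc, leftUnitor_naturality, idempotentMul,
    Category.assoc]

lemma whiskerRight_comp_idempotentMul_eq_leftUnitor_iff (e : 𝟙_ C ⟶ U) :
    (e ▷ U) ≫ idempotentMul u = (λ_ U).hom ↔ (e ≫ u) ▷ U = 𝟙 _ := by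
  rw [idempotentMul, comp_whiskerRight, ← Category.assoc, cancel_mono_id]

lemma isIso_whiskerRight_of_isIso_idempotentMul [IsIso (idempotentMul u)] : IsIso (u ▷ U) := by
  rw [show u ▷ U = idempotentMul u ≫ (λ_ U).inv by simp [idempotentMul]]
  infer_instance

variable {u} (hc : idempotentMul u = (U ◁ u) ≫ (ρ_ U).hom)
include hc

lemma whiskerLeft_comp_idempotentMul_eq_rightUnitor_iff (e : 𝟙_ C ⟶ U) :
    (U ◁ e) ≫ idempotentMul u = (ρ_ U).hom ↔ U ◁ (e ≫ u) = 𝟙 _ := by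
  rw [hc, whiskerLeft_comp, ← Category.assoc, cancel_mono_id]

lemma isIso_whiskerLeft_of_isIso_idempotentMul [IsIso (idempotentMul u)] : IsIso (U ◁ u) := by
  rw [show U ◁ u = idempotentMul u ≫ (ρ_ U).inv by simp [hc]]
  infer_instance

lemma idempotentMul_assoc :
    (α_ U U U).hom ≫ (U ◁ idempotentMul u) ≫ idempotentMul u =
      (idempotentMul u ▷ U) ≫ idempotentMul u := by
  conv_rhs => rw [hc]
  rw [idempotentMul]
  simp only [whiskerLeft_comp, comp_whiskerRight, Category.assoc]
  rw [← associator_naturality_middle_assoc, triangle_assoc, ← idempotentMul, hc]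

lemma whiskerRight_comp_idempotentMul (f : U ⟶ U) :
    (f ▷ U) ≫ idempotentMul u = idempotentMul u ≫ f := by
  rw [hc, ← whisker_exchange_assoc]
  simp

lemma eq_id_of_whiskerRight_eq_id [IsIso (idempotentMul u)] {f : U ⟶ U} (hf : f ▷ U = 𝟙 _) :
    f = 𝟙 U := by
  rw [← cancel_epi (idempotentMul u), ← whiskerRight_comp_idempotentMul hc, hf]
  simp

lemma comp_eq_id_iff [IsIso (idempotentMul u)] (e : 𝟙_ C ⟶ U) :
    u ≫ e = 𝟙 U ↔ (e ▷ U) ≫ idempotentMul u = (λ_ U).hom := by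
  have := isIso_whiskerRight_of_isIso_idempotentMul u
  rw [whiskerRight_comp_idempotentMul_eq_leftUnitor_iff, comp_whiskerRight,
    comp_hom_eq_id (u ▷ U), ← hom_comp_eq_id (u ▷ U), ← comp_whiskerRight]
  exact ⟨fun he => by rw [he, id_whiskerRight], eq_id_of_whiskerRight_eq_id hc⟩

lemma whiskerLeft_comp_idempotentMul_of_comp_eq_id [IsIso (idempotentMul u)] {e : 𝟙_ C ⟶ U}
    (he : u ≫ e = 𝟙 U) : (U ◁ e) ≫ idempotentMul u = (ρ_ U).hom := by
  have := isIso_whiskerLeft_of_isIso_idempotentMul hc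
  rw [whiskerLeft_comp_idempotentMul_eq_rightUnitor_iff hc, whiskerLeft_comp,
    comp_hom_eq_id (U ◁ u), ← hom_comp_eq_id (U ◁ u), ← whiskerLeft_comp, he, whiskerLeft_id]

lemma coevaluation_evaluation_iff (η : 𝟙_ C ⟶ U ⊗ U) :
    (U ◁ η) ≫ (α_ U U U).inv ≫ (((u ⊗ₘ u) ≫ (λ_ (𝟙_ C)).hom) ▷ U) =
        (ρ_ U).hom ≫ (λ_ U).inv ↔
      (U ◁ (η ≫ idempotentMul u)) ≫ idempotentMul u = (ρ_ U).hom := by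
  rw [← cancel_mono (λ_ U).hom]
  simp only [Category.assoc, Iso.inv_hom_id, Category.comp_id]
  rw [tensorHom_self_comp_leftUnitor, comp_whiskerRight, Category.assoc, ← idempotentMul,
    ← idempotentMul_assoc hc, Iso.inv_hom_id_assoc, whiskerLeft_comp_assoc]

lemma evaluation_coevaluation_iff (η : 𝟙_ C ⟶ U ⊗ U) :
    (η ▷ U) ≫ (α_ U U U).hom ≫ (U ◁ ((u ⊗ₘ u) ≫ (λ_ (𝟙_ C)).hom)) =
        (λ_ U).hom ≫ (ρ_ U).inv ↔
      ((η ≫ idempotentMul u) ▷ U) ≫ idempotentMul u = (λ_ U).hom := by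
  rw [← cancel_mono (ρ_ U).hom]
  simp only [Category.assoc, Iso.inv_hom_id, Category.comp_id]
  rw [tensorHom_self_comp_leftUnitor, whiskerLeft_comp, Category.assoc, ← hc,
    idempotentMul_assoc hc, comp_whiskerRight_assoc]

end

/-- A central idempotent `u : U ⟶ I` is a split monomorphism if and only if `U` is self-dual
with evaluation `(u ⊗ u) ≫ λ_I`, i.e. there exists a coevaluation `η : I ⟶ U ⊗ U` satisfying
the two zigzag identities exhibiting an adjunction `U ⊣ U`. -/
theorem stmt13 {C : Type*} [Category C] [MonoidalCategory C]
    {U : C} (u : U ⟶ 𝟙_ C) (σ : HalfBraiding U) (h : IsCentralIdempotent u σ) :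
    (∃ e : 𝟙_ C ⟶ U, u ≫ e = 𝟙 U) ↔
    (∃ η : 𝟙_ C ⟶ U ⊗ U,
      (U ◁ η) ≫ (α_ U U U).inv ≫ (((u ⊗ₘ u) ≫ (λ_ (𝟙_ C)).hom) ▷ U) =
        (ρ_ U).hom ≫ (λ_ U).inv ∧
      (η ▷ U) ≫ (α_ U U U).hom ≫ (U ◁ ((u ⊗ₘ u) ≫ (λ_ (𝟙_ C)).hom)) =
        (λ_ U).hom ≫ (ρ_ U).inv) := by
  have hc : idempotentMul u = (U ◁ u) ≫ (ρ_ U).hom := h.central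
  have : IsIso (idempotentMul u) := h.isIso
  simp only [coevaluation_evaluation_iff hc, evaluation_coevaluation_iff hc]
  constructor
  · rintro ⟨e, he⟩
    have hη : (e ≫ inv (idempotentMul u)) ≫ idempotentMul u = e := by simp
    refine ⟨e ≫ inv (idempotentMul u), ?_, ?_⟩ <;> rw [hη]
    · exact whiskerLeft_comp_idempotentMul_of_comp_eq_id hc he
    · exact (comp_eq_id_iff hc e).1 he
  · rintro ⟨η, -, hη⟩
    exact ⟨η ≫ idempotentMul u, (comp_eq_id_iff hc _).2 hη⟩
end

section
/- Let L be a distributive lattice with a least element. Let Spec(L) be the set of prime filters of L, equipped with the topology generated by the sets B_u = { P ∈ Spec(L) : u ∈ P } for u ∈ L. Then for every u ∈ L the basic open set B_u is a compact subset of Spec(L). -/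
/-- A prime filter of a lattice: a nonempty, upward-closed, downward-directed proper subset
`P` such that `u ⊔ v ∈ P` implies `u ∈ P` or `v ∈ P`. -/
structure IsPrimeFilter {L : Type*} [Lattice L] (P : Set L) : Prop where
  nonempty : P.Nonempty
  upward : ∀ a b : L, a ∈ P → a ≤ b → b ∈ P
  directed : ∀ a b : L, a ∈ P → b ∈ P → ∃ c ∈ P, c ≤ a ∧ c ≤ b
  proper : P ≠ Set.univ
  prime : ∀ a b : L, a ⊔ b ∈ P → a ∈ P ∨ b ∈ P

/-- The prime spectrum of a lattice: the set of prime filters. -/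
def LatticeSpec (L : Type*) [Lattice L] : Type _ := { P : Set L // IsPrimeFilter P }

/-- The topology on the prime spectrum generated by the basic sets
`B_u = { P | u ∈ P }` for `u ∈ L`. -/
instance (L : Type*) [Lattice L] : TopologicalSpace (LatticeSpec L) :=
  TopologicalSpace.generateFrom { S | ∃ u : L, S = { P : LatticeSpec L | u ∈ P.1 } }

section Aux

variable {L : Type*} [DistribLattice L] [OrderBot L]

/-- A prime filter is closed under meets. -/
lemma IsPrimeFilter.inf_mem {P : Set L} (hP : IsPrimeFilter P) {a b : L}
    (ha : a ∈ P) (hb : b ∈ P) : a ⊓ b ∈ P := by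
  obtain ⟨c, hc, hca, hcb⟩ := hP.directed a b ha hb
  exact hP.upward c (a ⊓ b) hc (le_inf hca hcb)

/-- If a finite join belongs to a prime filter, some element of it belongs. -/
lemma IsPrimeFilter.exists_mem_of_finsetSup {P : Set L} (hP : IsPrimeFilter P)
    (t : Finset L) (h : t.sup id ∈ P) : ∃ v ∈ t, v ∈ P := by
  classical
  induction t using Finset.induction_on with
  | empty =>
      exfalso
      apply hP.proper
      apply Set.eq_univ_of_forall
      intro x
      simpa using hP.upward _ x h bot_le
  | @insert a s ha ih =>
      rw [Finset.sup_insert] at h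
      rcases hP.prime _ _ h with h' | h'
      · exact ⟨a, Finset.mem_insert_self a s, h'⟩
      · obtain ⟨v, hv, hvP⟩ := ih h'
        exact ⟨v, Finset.mem_insert_of_mem hv, hvP⟩

/-- Prime filter existence: if `u` is below no finite join from `S`, there is a prime
filter containing `u` and disjoint from `S`. -/
lemma exists_primeFilter (u : L) (S : Set L)
    (h : ∀ t : Finset L, ↑t ⊆ S → ¬ u ≤ t.sup id) :
    ∃ P : Set L, IsPrimeFilter P ∧ u ∈ P ∧ ∀ v ∈ S, v ∉ P := by
  classical
  -- Work in `WithTop L`, which is a bounded distributive lattice.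
  let J : Order.Ideal (WithTop L) :=
    { carrier := {x | ∃ t : Finset L, ↑t ⊆ S ∧ x ≤ ((t.sup id : L) : WithTop L)}
      lower' := by
        rintro x y hyx ⟨t, htS, hxt⟩
        exact ⟨t, htS, hyx.trans hxt⟩
      nonempty' := ⟨((⊥ : L) : WithTop L), ∅, by simp⟩
      directed' := by
        rintro x ⟨t, htS, hxt⟩ y ⟨s, hsS, hys⟩
        refine ⟨(((t ∪ s).sup id : L) : WithTop L), ⟨t ∪ s, ?_, le_rfl⟩, ?_, ?_⟩
        · intro v hv
          simp only [Finset.coe_union, Set.mem_union] at hv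
          exact hv.elim (fun h' => htS h') fun h' => hsS h'
        · exact hxt.trans (by exact_mod_cast Finset.sup_mono Finset.subset_union_left)
        · exact hys.trans (by exact_mod_cast Finset.sup_mono Finset.subset_union_right) }
  let F : Order.PFilter (WithTop L) := Order.PFilter.principal ((u : WithTop L))
  have hFI : Disjoint (F : Set (WithTop L)) (J : Set (WithTop L)) := by
    rw [Set.disjoint_left]
    rintro x hxF ⟨t, htS, hxt⟩
    have hux : ((u : WithTop L)) ≤ x := hxF
    have : ((u : WithTop L)) ≤ ((t.sup id : L) : WithTop L) := hux.trans hxt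
    exact h t htS (by exact_mod_cast this)
  obtain ⟨J', hJ'prime, hJJ', hdisj⟩ :=
    DistribLattice.prime_ideal_of_disjoint_filter_ideal hFI
  refine ⟨{a : L | (a : WithTop L) ∉ (J' : Set (WithTop L))}, ?_, ?_, ?_⟩
  · constructor
    · refine ⟨u, ?_⟩
      intro hu
      exact Set.disjoint_left.mp hdisj (le_rfl : ((u : WithTop L)) ≤ u) hu
    · intro a b ha hab hb
      exact ha (J'.lower (by exact_mod_cast hab) hb)
    · intro a b ha hb
      refine ⟨a ⊓ b, ?_, inf_le_left, inf_le_right⟩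
      intro hmem
      have : ((a : WithTop L) ⊓ (b : WithTop L)) ∈ J' := by
        simpa [WithTop.coe_inf] using hmem
      rcases hJ'prime.mem_or_mem this with h' | h'
      · exact ha h'
      · exact hb h'
    · intro huniv
      have hbot : ((⊥ : L) : WithTop L) ∈ J' := hJJ' ⟨∅, by simp, by simp⟩
      have : (⊥ : L) ∈ {a : L | (a : WithTop L) ∉ (J' : Set (WithTop L))} := by
        rw [huniv]; trivial
      exact this hbot
    · intro a b hab
      by_contra hcon
      push_neg at hcon
      obtain ⟨ha, hb⟩ := hcon
      simp only [Set.mem_setOf_eq, not_not] at ha hb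
      apply hab
      have : ((a : WithTop L) ⊔ (b : WithTop L)) ∈ J' := Order.Ideal.sup_mem ha hb
      simpa [WithTop.coe_sup] using this
  · intro hu
    exact Set.disjoint_left.mp hdisj (le_rfl : ((u : WithTop L)) ≤ u) hu
  · intro v hv hvP
    exact hvP (hJJ' ⟨{v}, by simpa using hv, by simp⟩)

end Aux

/-- In the prime spectrum of a distributive lattice with a least element, every basic open
set `B_u = { P | u ∈ P }` is compact. -/
theorem stmt18 {L : Type*} [DistribLattice L] [OrderBot L] (u : L) :
    IsCompact { P : LatticeSpec L | u ∈ P.1 } := by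
  classical
  set 𝒮 : Set (Set (LatticeSpec L)) :=
    { S | ∃ u : L, S = { P : LatticeSpec L | u ∈ P.1 } } with h𝒮
  have hb : TopologicalSpace.IsTopologicalBasis
      ((fun f => (⋂₀ f : Set (LatticeSpec L))) '' {f : Set (Set (LatticeSpec L)) | f.Finite ∧ f ⊆ 𝒮}) :=
    TopologicalSpace.isTopologicalBasis_of_subbasis rfl
  apply isCompact_of_finite_subcover
  intro ι U hU hcover
  by_cases htriv : ∃ i : ι, Set.univ ⊆ U i
  · obtain ⟨i, hi⟩ := htriv
    exact ⟨{i}, fun x _ => Set.mem_biUnion (Finset.mem_singleton_self i) (hi trivial)⟩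
  push_neg at htriv
  -- For each finite intersection of subbasic sets containing a point, shrink to a
  -- single subbasic set.
  have key : ∀ (f : Set (Set (LatticeSpec L))), f.Finite → ∀ (x : LatticeSpec L), f ⊆ 𝒮 →
      x ∈ ⋂₀ f → ⋂₀ f = Set.univ ∨
        ∃ w : L, x ∈ {P : LatticeSpec L | w ∈ P.1} ∧
          {P : LatticeSpec L | w ∈ P.1} ⊆ ⋂₀ f := by
    intro f hf
    refine Set.Finite.induction_on f hf (fun _ _ _ => by left; simp) ?_
    intro a f ha hf ih x hsub hx
    obtain ⟨v, hv⟩ := hsub (Set.mem_insert a f)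
    have hxa : x ∈ a := Set.mem_sInter.mp hx a (Set.mem_insert a f)
    have hxf : x ∈ ⋂₀ f := Set.mem_sInter.mpr fun s hs => Set.mem_sInter.mp hx s (Set.mem_insert_of_mem a hs)
    rcases ih x (fun s hs => hsub (Set.mem_insert_of_mem a hs)) hxf with hEq | ⟨w, hxw, hw⟩
    · right
      refine ⟨v, by rwa [hv] at hxa, ?_⟩
      rw [Set.sInter_insert, hEq, Set.inter_univ, hv]
    · right
      refine ⟨v ⊓ w, ?_, ?_⟩
      · exact x.2.inf_mem (by rwa [hv] at hxa) hxw
      · rw [Set.sInter_insert]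
        intro P hP
        constructor
        · rw [hv]
          exact P.2.upward _ _ hP inf_le_left
        · exact hw (P.2.upward _ _ hP inf_le_right)
  -- The set of lattice elements whose basic set lies inside some cover member.
  set S : Set L := { v : L | ∃ i : ι, {P : LatticeSpec L | v ∈ P.1} ⊆ U i } with hS
  have hsubcover : { P : LatticeSpec L | u ∈ P.1 } ⊆
      ⋃ v ∈ S, {P : LatticeSpec L | v ∈ P.1} := by
    intro x hx
    obtain ⟨i, hi⟩ := Set.mem_iUnion.mp (hcover hx)
    obtain ⟨b, ⟨f, ⟨hf, hfsub⟩, rfl⟩, hxb, hbU⟩ := hb.exists_subset_of_mem_open hi (hU i)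
    rcases key f hf x hfsub hxb with hEq | ⟨w, hxw, hw⟩
    · exact absurd (hEq ▸ hbU) (htriv i)
    · exact Set.mem_biUnion ⟨i, hw.trans hbU⟩ hxw
  -- Extract a finite join dominating `u`.
  by_cases hfin : ∃ t : Finset L, ↑t ⊆ S ∧ u ≤ t.sup id
  · obtain ⟨t, htS, hut⟩ := hfin
    choose g hg using fun v (hv : v ∈ S) => hv
    refine ⟨t.attach.image (fun v => g v.1 (htS v.2)), ?_⟩
    intro x hx
    have hsup : t.sup id ∈ x.1 := x.2.upward _ _ hx hut
    obtain ⟨v, hvt, hvx⟩ := x.2.exists_mem_of_finsetSup t hsup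
    refine Set.mem_biUnion (Finset.mem_image.mpr ⟨⟨v, hvt⟩, Finset.mem_attach _ _, rfl⟩) ?_
    exact hg v (htS hvt) hvx
  · exfalso
    push_neg at hfin
    obtain ⟨P, hP, huP, hPS⟩ := exists_primeFilter u S fun t ht => hfin t ht
    obtain ⟨v, hvS, hvP⟩ := Set.mem_iUnion₂.mp (hsubcover (show (⟨P, hP⟩ : LatticeSpec L) ∈ {P : LatticeSpec L | u ∈ P.1} from huP))
    exact hPS v hvS hvP
end
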